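/- A type II tensor can be continuously deformed onto its boost-weight-zero part by boosts: let T be a rank-r tensor on ℝ⁴ all of whose components of positive boost weight vanish, and for λ ∈ ℝ let B_λ = diag(e^λ, e^{−λ}, 1, 1) be the boost (an η-orthogonal matrix). Then (B_λ·T)_{a₁⋯a_r} = e^{λ·b} T_{a₁⋯a_r}, where b is the boost weight of the component, and B_λ·T converges, as λ → ∞, to the tensor (T)₀ obtained by keeping exactly the boost-weight-zero components of T. -/

import Mathlib

open Matrix

/-- The null-frame Minkowski metric on `ℝ⁴` as a matrix (indices 0,1,2,3 for 1,2,3,4). -/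
noncomputable def etaM : Matrix (Fin 4) (Fin 4) ℝ :=
  Matrix.of fun a b =>
    if (a = 0 ∧ b = 1) ∨ (a = 1 ∧ b = 0) then -1
    else if (a = 2 ∧ b = 2) ∨ (a = 3 ∧ b = 3) then 1 else 0

/-- The boost weight of a rank-`r` component index. -/
def bw {r : ℕ} (a : Fin r → Fin 4) : ℤ :=
  ((Finset.univ.filter fun i => a i = 0).card : ℤ) -
    ((Finset.univ.filter fun i => a i = 1).card : ℤ)

/-- Action of a frame-transformation matrix on a rank-`r` tensor. -/
noncomputable def act {r : ℕ} (Λ : Matrix (Fin 4) (Fin 4) ℝ) (T : (Fin r → Fin 4) → ℝ) :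
    (Fin r → Fin 4) → ℝ :=
  fun a => ∑ b : Fin r → Fin 4, (∏ i, Λ (b i) (a i)) * T b

/-- The boost `B_λ = diag(e^λ, e^{−λ}, 1, 1)`. -/
noncomputable def boostM (l : ℝ) : Matrix (Fin 4) (Fin 4) ℝ :=
  Matrix.diagonal ![Real.exp l, Real.exp (-l), 1, 1]

open Filter Topology

def indexWeight (j : Fin 4) : ℤ :=
  if j = 0 then 1 else if j = 1 then -1 else 0

lemma bw_eq_sum_indexWeight {r : ℕ} (a : Fin r → Fin 4) :
    bw a = ∑ i, indexWeight (a i) := by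
  rw [bw, Finset.card_filter, Finset.card_filter]
  push_cast
  rw [← Finset.sum_sub_distrib]
  refine Finset.sum_congr rfl fun i _ => ?_
  unfold indexWeight
  split_ifs <;> simp_all

lemma boostM_eq_diagonal (l : ℝ) :
    boostM l = diagonal fun j => Real.exp (l * indexWeight j) := by
  rw [boostM]
  congr 1
  ext j
  fin_cases j <;> simp [indexWeight]

lemma boostM_transpose_mul_etaM_mul (l : ℝ) : (boostM l)ᵀ * etaM * boostM l = etaM := by
  ext i j
  fin_cases i <;> fin_cases j <;>
    simp [boostM, etaM, mul_apply, Fin.sum_univ_four, diagonal, ← Real.exp_add]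

lemma act_diagonal {r : ℕ} (d : Fin 4 → ℝ) (T : (Fin r → Fin 4) → ℝ) (a : Fin r → Fin 4) :
    act (diagonal d) T a = (∏ i, d (a i)) * T a := by
  rw [act, Finset.sum_eq_single_of_mem a (Finset.mem_univ a)]
  · simp only [diagonal_apply_eq]
  · intro b _ hb
    obtain ⟨i, hi⟩ := Function.ne_iff.mp hb
    rw [Finset.prod_eq_zero (Finset.mem_univ i) (diagonal_apply_ne d hi), zero_mul]

lemma act_boostM {r : ℕ} (T : (Fin r → Fin 4) → ℝ) (l : ℝ) (a : Fin r → Fin 4) :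
    act (boostM l) T a = Real.exp (l * (bw a : ℝ)) * T a := by
  rw [boostM_eq_diagonal, act_diagonal, ← Real.exp_sum, ← Finset.mul_sum, bw_eq_sum_indexWeight]
  push_cast
  rfl

lemma tendsto_exp_mul_int_mul_atTop {b : ℤ} {t : ℝ} (ht : 0 < b → t = 0) :
    Tendsto (fun l : ℝ => Real.exp (l * b) * t) atTop (𝓝 (if b = 0 then t else 0)) := by
  rcases lt_trichotomy b 0 with hb | rfl | hb
  · rw [if_neg hb.ne]
    have hlin : Tendsto (fun l : ℝ => l * b) atTop atBot :=
      tendsto_id.atTop_mul_const_of_neg (by exact_mod_cast hb)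
    simpa using (Real.tendsto_exp_atBot.comp hlin).mul_const t
  · simp
  · simp [hb.ne', ht hb]

theorem boost_deforms_typeII_to_bw_zero_part
    {r : ℕ} (T : (Fin r → Fin 4) → ℝ) (hT : ∀ a, 0 < bw a → T a = 0) :
    (∀ l : ℝ, (boostM l)ᵀ * etaM * boostM l = etaM) ∧
    (∀ (l : ℝ) (a : Fin r → Fin 4),
      act (boostM l) T a = Real.exp (l * (bw a : ℝ)) * T a) ∧
    Filter.Tendsto (fun l : ℝ => act (boostM l) T) Filter.atTop
      (nhds fun a => if bw a = 0 then T a else 0) := by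
  refine ⟨boostM_transpose_mul_etaM_mul, act_boostM T, ?_⟩
  rw [tendsto_pi_nhds]
  intro a
  simp only [act_boostM]
  exact tendsto_exp_mul_int_mul_atTop (hT a)
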